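/- arXiv:1103.3158 — 5 statements merged into one kernel-verified Lean document; each statement's English description precedes it below -/
import Mathlib

section
/- In the virtual braid group VB_n (n ≥ 3), with μ_{i,i+1} := σ_i v_i, μ_{i+1,i} := v_i σ_i, and μ_{i,i+2} := v_{i+1} μ_{i,i+1} v_{i+1}, the stringy braid relation μ_{i+1,i+2} μ_{i,i+2} μ_{i,i+1} = μ_{i,i+1} μ_{i,i+2} μ_{i+1,i+2} holds for all valid i. -/
lemma key_aux {G : Type*} [Group G] (a b x y : G)
    (hx : x * x = 1) (hy : y * y = 1)
    (hbr : a * b * a = b * a * b)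
    (hsym : x * y * x = y * x * y)
    (hm : x * b * x = y * a * y) :
    (b * y) * (y * (a * x) * y) * (a * x) =
    (a * x) * (y * (a * x) * y) * (b * y) := by
  have hx2 : ∀ g : G, x * (x * g) = g := fun g => by rw [← mul_assoc, hx, one_mul]
  have hy2 : ∀ g : G, y * (y * g) = g := fun g => by rw [← mul_assoc, hy, one_mul]
  have hmt : ∀ g : G, x * (b * (x * g)) = y * (a * (y * g)) := fun g => by
    simp only [← mul_assoc]; rw [hm]
  have hst : ∀ g : G, x * (y * (x * g)) = y * (x * (y * g)) := fun g => by
    simp only [← mul_assoc]; rw [hsym]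
  have hbt : ∀ g : G, a * (b * (a * g)) = b * (a * (b * g)) := fun g => by
    simp only [← mul_assoc]; rw [hbr]
  have hm2 : x * b = y * (a * (y * x)) := by
    have := hmt x
    rwa [hx, mul_one] at this
  refine mul_right_cancel (b := y) ?_
  simp only [mul_assoc]
  rw [hy2]
  conv_lhs =>
    rw [show x * y = y * (y * (x * y)) from (hy2 (x*y)).symm, ← hmt, hx2, hst, hy,
      mul_one]
  conv_rhs =>
    rw [hy, mul_one, show x * (y * b) = y * (y * (x * (y * b))) from (hy2 _).symm,
      ← hmt, hx2, hst, hy2, hm2, hy2, hbt]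

/-- In `VB_n` (`n ≥ 3`), with `μ_{i,i+1} := σ_i v_i`, `μ_{i+1,i} := v_i σ_i`,
`μ_{i,i+2} := v_{i+1} μ_{i,i+1} v_{i+1}`, the stringy braid relation
`μ_{i+1,i+2} μ_{i,i+2} μ_{i,i+1} = μ_{i,i+1} μ_{i,i+2} μ_{i+1,i+2}` holds. -/
theorem stmt_3 (n : ℕ) (hn : 3 ≤ n) (G : Type*) [Group G] (σ v : ℕ → G)
    (hB1 : ∀ i, 1 ≤ i → i + 2 ≤ n → σ i * σ (i+1) * σ i = σ (i+1) * σ i * σ (i+1))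
    (hB2 : ∀ i j, 1 ≤ i → i + 2 ≤ j → j + 1 ≤ n → σ i * σ j = σ j * σ i)
    (hS1 : ∀ i, 1 ≤ i → i + 2 ≤ n → v i * v (i+1) * v i = v (i+1) * v i * v (i+1))
    (hS2 : ∀ i j, 1 ≤ i → i + 2 ≤ j → j + 1 ≤ n → v i * v j = v j * v i)
    (hS3 : ∀ i, 1 ≤ i → i + 1 ≤ n → v i * v i = 1)
    (hM1 : ∀ i, 1 ≤ i → i + 2 ≤ n → v i * σ (i+1) * v i = v (i+1) * σ i * v (i+1))
    (hM2 : ∀ i j, 1 ≤ i → 1 ≤ j → i + 1 ≤ n → j + 1 ≤ n → (i + 2 ≤ j ∨ j + 2 ≤ i) →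
      σ i * v j = v j * σ i)
    :
    ∀ i, 1 ≤ i → i + 2 ≤ n →
      (σ (i+1) * v (i+1)) * (v (i+1) * (σ i * v i) * v (i+1)) * (σ i * v i) =
      (σ i * v i) * (v (i+1) * (σ i * v i) * v (i+1)) * (σ (i+1) * v (i+1)) := by
  intro i hi h2
  exact key_aux (σ i) (σ (i+1)) (v i) (v (i+1))
    (hS3 i hi (by omega)) (hS3 (i+1) (by omega) (by omega))
    (hB1 i hi h2) (hS1 i hi h2) (hM1 i hi h2)
end

section
/- In the virtual braid group VB_n (n ≥ 3), the relation σ_1 v_1 v_2 σ_1 v_1 v_2 σ_2 v_2 = σ_2 v_2 v_2 σ_1 v_1 v_2 σ_2 v_2 holds; equivalently, with μ_{12} = σ_1 v_1, μ_{13} = v_2 μ_{12} v_2, μ_{23} = σ_2 v_2, one has μ_{12} μ_{13} μ_23} = μ_{23} μ_{13} μ_{12}. -/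
/-- In `VB_n` (`n ≥ 3`), with `μ_12 = σ_1 v_1`, `μ_13 = v_2 μ_12 v_2`, `μ_23 = σ_2 v_2`,
one has `μ_12 μ_13 μ_23 = μ_23 μ_13 μ_12`. -/
theorem stmt_4 (n : ℕ) (hn : 3 ≤ n) (G : Type*) [Group G] (σ v : ℕ → G)
    (hB1 : ∀ i, 1 ≤ i → i + 2 ≤ n → σ i * σ (i+1) * σ i = σ (i+1) * σ i * σ (i+1))
    (hB2 : ∀ i j, 1 ≤ i → i + 2 ≤ j → j + 1 ≤ n → σ i * σ j = σ j * σ i)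
    (hS1 : ∀ i, 1 ≤ i → i + 2 ≤ n → v i * v (i+1) * v i = v (i+1) * v i * v (i+1))
    (hS2 : ∀ i j, 1 ≤ i → i + 2 ≤ j → j + 1 ≤ n → v i * v j = v j * v i)
    (hS3 : ∀ i, 1 ≤ i → i + 1 ≤ n → v i * v i = 1)
    (hM1 : ∀ i, 1 ≤ i → i + 2 ≤ n → v i * σ (i+1) * v i = v (i+1) * σ i * v (i+1))
    (hM2 : ∀ i j, 1 ≤ i → 1 ≤ j → i + 1 ≤ n → j + 1 ≤ n → (i + 2 ≤ j ∨ j + 2 ≤ i) →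
      σ i * v j = v j * σ i)
    :
    (σ 1 * v 1) * (v 2 * (σ 1 * v 1) * v 2) * (σ 2 * v 2) =
    (σ 2 * v 2) * (v 2 * (σ 1 * v 1) * v 2) * (σ 1 * v 1) := by
  have h1 : (1:ℕ) + 2 ≤ n := by omega
  have vv1 : v 1 * v 1 = 1 := hS3 1 (by norm_num) (by omega)
  have vv2 : v 2 * v 2 = 1 := hS3 2 (by norm_num) (by omega)
  have b : σ 1 * σ 2 * σ 1 = σ 2 * σ 1 * σ 2 := hB1 1 (le_refl 1) h1
  have s : v 1 * v 2 * v 1 = v 2 * v 1 * v 2 := hS1 1 (le_refl 1) h1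
  have m : v 1 * σ 2 * v 1 = v 2 * σ 1 * v 2 := hM1 1 (le_refl 1) h1
  -- derived word relations
  have e : v 1 * v 2 * σ 1 = σ 2 * v 1 * v 2 := by
    have h := congrArg (fun x => v 1 * x * v 2) m
    simp only [← mul_assoc] at h
    rw [vv1, one_mul, mul_assoc _ (v 2) (v 2), vv2, mul_one] at h
    exact h.symm
  have e2 : v 1 * v 2 * v 1 * v 2 = v 2 * v 1 := by
    rw [s, mul_assoc, vv2, mul_one]
  have e3 : v 1 * σ 2 = v 2 * σ 1 * v 2 * v 1 := by
    rw [← m, mul_assoc, vv1, mul_one]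
  -- pointwise helpers
  have A : ∀ x : G, v 1 * (v 2 * (σ 1 * x)) = σ 2 * (v 1 * (v 2 * x)) := fun x => by
    simp only [← mul_assoc]; rw [e]
  have Sh : ∀ x : G, v 1 * (v 2 * (v 1 * (v 2 * x))) = v 2 * (v 1 * x) := fun x => by
    simp only [← mul_assoc]; rw [e2]
  have Bp : ∀ x : G, v 1 * (σ 2 * x) = v 2 * (σ 1 * (v 2 * (v 1 * x))) := fun x => by
    simp only [← mul_assoc]; rw [e3]
  have V2 : ∀ x : G, v 2 * (v 2 * x) = x := fun x => by
    rw [← mul_assoc, vv2, one_mul]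
  have Br : ∀ x : G, σ 1 * (σ 2 * (σ 1 * x)) = σ 2 * (σ 1 * (σ 2 * x)) := fun x => by
    simp only [← mul_assoc]; rw [b]
  have s' : v 1 * (v 2 * v 1) = v 2 * (v 1 * v 2) := by
    simp only [← mul_assoc]; exact s
  simp only [mul_assoc]
  conv_lhs => rw [A, Sh, Bp, V2, Br]
  conv_rhs => rw [V2, A, s']
end

section
/- The subgroup VP_n = ker(π : VB_n → S_n) is generated by the elements μ_{ij} for all i ≠ j, where μ_{i,i+1} = σ_i v_i, μ_{ij} = v_{j-1}···v_{i+1} μ_{i,i+1} v_{i+1}···v_{j-1} for i < j, and μ_{ji} = t_{ij} μ_{ij} t_{ij} with t_{ij} the word in the v's representing the transposition (i j). -/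
/-- Generators of the virtual braid group `VB n`: `Sum.inl i` is the braid generator
`σ_{i+1}` and `Sum.inr i` is the virtual generator `v_{i+1}` (0-indexed `i : Fin (n-1)`). -/
abbrev VBGen (n : ℕ) := Fin (n-1) ⊕ Fin (n-1)

namespace VBDef

def S {n : ℕ} (i : Fin (n-1)) : FreeGroup (VBGen n) := FreeGroup.of (Sum.inl i)
def V {n : ℕ} (i : Fin (n-1)) : FreeGroup (VBGen n) := FreeGroup.of (Sum.inr i)

/-- The defining relations of the virtual braid group, as elements of the free group. -/
def VBRels (n : ℕ) : Set (FreeGroup (VBGen n)) :=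
  { r | (∃ i j : Fin (n-1), (i : ℕ) + 1 = j ∧
          r = S i * S j * S i * (S j * S i * S j)⁻¹) ∨
        (∃ i j : Fin (n-1), (i : ℕ) + 2 ≤ j ∧
          r = S i * S j * (S j * S i)⁻¹) ∨
        (∃ i j : Fin (n-1), (i : ℕ) + 1 = j ∧
          r = V i * V j * V i * (V j * V i * V j)⁻¹) ∨
        (∃ i j : Fin (n-1), (i : ℕ) + 2 ≤ j ∧
          r = V i * V j * (V j * V i)⁻¹) ∨
        (∃ i : Fin (n-1), r = V i * V i) ∨
        (∃ i j : Fin (n-1), (i : ℕ) + 1 = j ∧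
          r = V i * S j * V i * (V j * S i * V j)⁻¹) ∨
        (∃ i j : Fin (n-1), ((i : ℕ) + 2 ≤ j ∨ (j : ℕ) + 2 ≤ i) ∧
          r = S i * V j * (V j * S i)⁻¹) }

end VBDef

/-- The virtual braid group on `n` strands, as a presented group. -/
abbrev VB (n : ℕ) := PresentedGroup (VBDef.VBRels n)

/-- The braid generator `σ` (0-indexed). -/
def σg {n : ℕ} (i : Fin (n-1)) : VB n := PresentedGroup.of (Sum.inl i)

/-- The virtual generator `v` (0-indexed). -/
def vg {n : ℕ} (i : Fin (n-1)) : VB n := PresentedGroup.of (Sum.inr i)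

/-- The strand position `i` in `Fin n`. -/
def pos0 {n : ℕ} (i : Fin (n-1)) : Fin n := ⟨i.1, by have := i.2; omega⟩

/-- The strand position `i+1` in `Fin n`. -/
def pos1 {n : ℕ} (i : Fin (n-1)) : Fin n := ⟨i.1 + 1, by have := i.2; omega⟩

/-- `σ` with natural-number index (0-based); junk value `1` out of range. -/
def sgn (n : ℕ) (i : ℕ) : VB n := if h : i < n - 1 then σg ⟨i, h⟩ else 1

/-- `v` with natural-number index (0-based); junk value `1` out of range. -/
def vgn (n : ℕ) (i : ℕ) : VB n := if h : i < n - 1 then vg ⟨i, h⟩ else 1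

/-- For strands `i < j` (0-based), the connecting string
`μ_{ij} = v_{j-1} ⋯ v_{i+1} · (σ_i v_i) · v_{i+1} ⋯ v_{j-1}`. -/
def muUp (n i j : ℕ) : VB n :=
  ((List.range (j - i - 1)).map (fun k => vgn n (j - 1 - k))).prod *
    (sgn n i * vgn n i) *
    ((List.range (j - i - 1)).map (fun k => vgn n (i + 1 + k))).prod

/-- For strands `i < j` (0-based), the word `t_{ij} = v_i ⋯ v_{j-2} v_{j-1} v_{j-2} ⋯ v_i`
in the `v`'s representing the transposition of strands `i` and `j`. -/
def tw (n i j : ℕ) : VB n :=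
  ((List.range (j - 1 - i)).map (fun k => vgn n (i + k))).prod *
    vgn n (j - 1) *
    ((List.range (j - 1 - i)).map (fun k => vgn n (j - 2 - k))).prod

/-- The connecting string `μ_{ij}` for arbitrary distinct strands (0-based):
`μ_{ij}` as above for `i < j`, and `μ_{ji} = t_{ij} μ_{ij} t_{ij}` for `j < i`. -/
def muG (n i j : ℕ) : VB n :=
  if i < j then muUp n i j else tw n j i * muUp n j i * tw n j i

/-!
Conjugation by `v_k` permutes the generators `μ_{ij}` as the transposition `(k k+1)` permutes
ordered pairs of strands. To see this uniformly, write `μ_{ij} = D σ_i v_i D⁻¹` and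
`μ_{ji} = D v_i σ_i D⁻¹` for `i < j`, with `D = v_{j-1} ⋯ v_{i+1}` (the latter because
`t_{ij} = D v_i D⁻¹`). Together with `σ_k = μ_{k,k+1} v_k`, this makes the subgroup `H`
generated by the `μ_{ij}` normal with `H W = VB_n`, where `W` is generated by the `v`'s.
The `μ_{ij}` lie in `ker π`, so it remains to see that `π` is injective on `W`: every element
of `⟨v_0, …, v_m⟩` is `u v_m ⋯ v_j` with `u ∈ ⟨v_0, …, v_{m-1}⟩`; its image under `π` sends
`j` to `m + 1`, while `π u` fixes `m + 1`, so induction on `m` applies.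
-/

namespace VirtualBraid

open VBDef

variable {n : ℕ}

section Relations

lemma vgn_val (k : Fin (n - 1)) : vgn n k = vg k := dif_pos k.2

lemma sgn_val (k : Fin (n - 1)) : sgn n k = σg k := dif_pos k.2

@[simp]
lemma vgn_mul_self (k : ℕ) : vgn n k * vgn n k = 1 := by
  unfold vgn
  split_ifs with hk
  · exact PresentedGroup.one_of_mem (x := V ⟨k, hk⟩ * V ⟨k, hk⟩)
      (Or.inr <| Or.inr <| Or.inr <| Or.inr <| Or.inl ⟨_, rfl⟩)
  · exact one_mul 1

lemma vgn_inv (k : ℕ) : (vgn n k)⁻¹ = vgn n k :=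
  inv_eq_of_mul_eq_one_right (vgn_mul_self k)

@[simp]
lemma vgn_mul_cancel_left (k : ℕ) (g : VB n) : vgn n k * (vgn n k * g) = g := by
  rw [← mul_assoc, vgn_mul_self, one_mul]

lemma vgn_commute {k l : ℕ} (h : k + 2 ≤ l ∨ l + 2 ≤ k) : Commute (vgn n k) (vgn n l) := by
  wlog hkl : k + 2 ≤ l generalizing k l
  · exact (this h.symm (h.resolve_left hkl)).symm
  unfold vgn
  split_ifs with hk hl
  · exact PresentedGroup.mk_eq_mk_of_mul_inv_mem (x := V ⟨k, hk⟩ * V ⟨l, hl⟩)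
      (y := V ⟨l, hl⟩ * V ⟨k, hk⟩)
      (Or.inr <| Or.inr <| Or.inr <| Or.inl ⟨_, _, hkl, rfl⟩)
  all_goals simp

lemma sgn_commute_vgn {k l : ℕ} (h : k + 2 ≤ l ∨ l + 2 ≤ k) :
    Commute (sgn n k) (vgn n l) := by
  unfold sgn vgn
  split_ifs with hk hl
  · exact PresentedGroup.mk_eq_mk_of_mul_inv_mem (x := S ⟨k, hk⟩ * V ⟨l, hl⟩)
      (y := V ⟨l, hl⟩ * S ⟨k, hk⟩)
      (Or.inr <| Or.inr <| Or.inr <| Or.inr <| Or.inr <| Or.inr ⟨_, _, h, rfl⟩)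
  all_goals simp

lemma vgn_braid {k : ℕ} (hk : k + 1 < n - 1) :
    vgn n k * vgn n (k + 1) * vgn n k = vgn n (k + 1) * vgn n k * vgn n (k + 1) := by
  simp only [vgn, hk, show k < n - 1 by omega, dite_true]
  exact PresentedGroup.mk_eq_mk_of_mul_inv_mem
    (Or.inr <| Or.inr <| Or.inl ⟨⟨k, _⟩, ⟨k + 1, hk⟩, rfl, rfl⟩)

lemma vgn_sgn_vgn {k : ℕ} (hk : k + 1 < n - 1) :
    vgn n k * sgn n (k + 1) * vgn n k = vgn n (k + 1) * sgn n k * vgn n (k + 1) := by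
  simp only [vgn, sgn, hk, show k < n - 1 by omega, dite_true]
  exact PresentedGroup.mk_eq_mk_of_mul_inv_mem
    (Or.inr <| Or.inr <| Or.inr <| Or.inr <| Or.inr <| Or.inl
      ⟨⟨k, _⟩, ⟨k + 1, hk⟩, rfl, rfl⟩)

end Relations

section Words

/-- The descending word `v_{b-1} ⋯ v_{a+1} v_a`, which moves strand `a` to position `b`. -/
def vDesc (n a b : ℕ) : VB n := ((List.range (b - a)).map fun k => vgn n (b - 1 - k)).prod

lemma vDesc_self (a : ℕ) : vDesc n a a = 1 := by
  simp [vDesc]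

lemma vDesc_succ {a b : ℕ} (h : a ≤ b) : vDesc n a (b + 1) = vgn n b * vDesc n a b := by
  rw [vDesc, vDesc, show b + 1 - a = b - a + 1 by omega, List.range_succ_eq_map]
  simp only [List.map_cons, List.prod_cons, List.map_map, Function.comp_def]
  congr 3
  funext k; congr 1; omega

lemma vDesc_eq_mul_vgn {a b : ℕ} (h : a < b) : vDesc n a b = vDesc n (a + 1) b * vgn n a := by
  rw [vDesc, vDesc, show b - a = b - (a + 1) + 1 by omega, List.range_succ]
  simp only [List.map_append, List.prod_append, List.map_cons, List.map_nil, List.prod_cons,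
    List.prod_nil, mul_one]
  congr 2; omega

lemma asc_eq_vDesc_inv (a b : ℕ) :
    ((List.range (b - a)).map fun k => vgn n (a + k)).prod = (vDesc n a b)⁻¹ := by
  rw [vDesc, List.prod_inv_reverse, ← List.map_reverse, ← List.map_reverse,
    List.range_eq_range', List.reverse_range', List.map_map, List.map_map,
    ← List.range_eq_range']
  refine congrArg List.prod (List.map_congr_left fun k hk => ?_)
  rw [List.mem_range] at hk
  simp only [Function.comp_apply, vgn_inv]
  congr 1; omega

lemma commute_vDesc {k a b : ℕ} (h : k + 2 ≤ a ∨ b + 1 ≤ k) :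
    Commute (vgn n k) (vDesc n a b) :=
  Commute.list_prod_right _ _ fun _ hy => by
    obtain ⟨i, hi, rfl⟩ := List.mem_map.mp hy
    exact vgn_commute (by grind)

lemma vgn_mul_vDesc {k a b : ℕ} (ha : a ≤ k) (hb : k + 2 ≤ b) (hk : k + 1 < n - 1) :
    vgn n k * vDesc n a b = vDesc n a b * vgn n (k + 1) := by
  induction b, hb using Nat.le_induction with
  | base =>
    rw [vDesc_succ (by omega), vDesc_succ ha, ← mul_assoc, ← mul_assoc,
      vgn_braid (by omega), mul_assoc _ _ (vDesc n a k),
      (commute_vDesc (Or.inr le_rfl)).eq]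
    group
  | succ b hb ih =>
    rw [vDesc_succ (by omega), ← mul_assoc, (vgn_commute (by omega)).eq, mul_assoc,
      ih, mul_assoc]

end Words

section Transport

/-- `x a` lives on the strands `a, a + 1`, and the `v`'s move it along with those strands. -/
structure IsLocalFamily (x : ℕ → VB n) : Prop where
  commute : ∀ {a k : ℕ}, k + 2 ≤ a ∨ a + 2 ≤ k → Commute (vgn n k) (x a)
  shift : ∀ {a : ℕ}, a + 2 < n →
    vgn n a * vgn n (a + 1) * x a * vgn n (a + 1) * vgn n a = x (a + 1)

/-- `x a` carried from the strands `a, a + 1` to the strands `a, b`. -/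
def transport (x : ℕ → VB n) (a b : ℕ) : VB n :=
  vDesc n (a + 1) b * x a * (vDesc n (a + 1) b)⁻¹

variable {x : ℕ → VB n}

lemma transport_succ_self (x : ℕ → VB n) (a : ℕ) : transport x a (a + 1) = x a := by
  simp [transport, vDesc_self]

lemma conj_mul_of_commute {G : Type*} [Group G] {g y z : G} (h : Commute y z) :
    g * y * z * (g * y)⁻¹ = g * z * g⁻¹ := by
  rw [mul_inv_rev, mul_assoc g y z, h.eq]; group

lemma vgn_mul_transport_mul_vgn (hx : IsLocalFamily x) {a b k : ℕ} (hab : a < b) (hb : b < n)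
    (hflip : ¬ (k = a ∧ b = a + 1)) :
    vgn n k * transport x a b * vgn n k =
      transport x (Equiv.swap k (k + 1) a) (Equiv.swap k (k + 1) b) := by
  have hconj : vgn n k * transport x a b * vgn n k =
      vgn n k * vDesc n (a + 1) b * x a * (vgn n k * vDesc n (a + 1) b)⁻¹ := by
    simp only [transport, mul_inv_rev, vgn_inv, mul_assoc]
  rw [hconj]
  rcases (show k + 2 ≤ a ∨ b + 1 ≤ k ∨ k + 1 = a ∨ (k = a ∧ a + 1 < b) ∨
      (a < k ∧ k + 2 ≤ b) ∨ k + 1 = b ∨ k = b by omega) with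
    hfar | hfar | rfl | ⟨rfl, hab'⟩ | ⟨hak, hkb⟩ | rfl | rfl
  · rw [Equiv.swap_apply_of_ne_of_ne (by omega) (by omega),
      Equiv.swap_apply_of_ne_of_ne (by omega) (by omega),
      (commute_vDesc (Or.inl (by omega))).eq, conj_mul_of_commute (hx.commute (Or.inl hfar))]
    rfl
  · rw [Equiv.swap_apply_of_ne_of_ne (by omega) (by omega),
      Equiv.swap_apply_of_ne_of_ne (by omega) (by omega),
      (commute_vDesc (Or.inr hfar)).eq, conj_mul_of_commute (hx.commute (Or.inr (by omega)))]
    rfl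
  · rw [Equiv.swap_apply_right, Equiv.swap_apply_of_ne_of_ne (by omega) (by omega), transport,
      vDesc_eq_mul_vgn (a := k + 1) (by omega), (commute_vDesc (Or.inl le_rfl)).eq,
      ← hx.shift (by omega)]
    simp only [mul_inv_rev, vgn_inv, mul_assoc, vgn_mul_cancel_left]
  · rw [Equiv.swap_apply_left, Equiv.swap_apply_of_ne_of_ne (by omega) (by omega), transport,
      vDesc_eq_mul_vgn (a := k + 1) (by omega), ← mul_assoc,
      (commute_vDesc (Or.inl le_rfl)).eq, ← hx.shift (by omega)]
    simp only [mul_inv_rev, vgn_inv, mul_assoc]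
  · rw [Equiv.swap_apply_of_ne_of_ne (by omega) (by omega),
      Equiv.swap_apply_of_ne_of_ne (by omega) (by omega),
      vgn_mul_vDesc hak hkb (by omega), conj_mul_of_commute (hx.commute (Or.inr (by omega)))]
    rfl
  · rw [Equiv.swap_apply_right, Equiv.swap_apply_of_ne_of_ne (by omega) (by omega),
      vDesc_succ (by omega), vgn_mul_cancel_left]
    rfl
  · rw [Equiv.swap_apply_left, Equiv.swap_apply_of_ne_of_ne (by omega) (by omega),
      ← vDesc_succ (by omega)]
    rfl

def vConj (x : ℕ → VB n) (a : ℕ) : VB n := vgn n a * x a * vgn n a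

lemma IsLocalFamily.vConj (hx : IsLocalFamily x) : IsLocalFamily (vConj x) where
  commute h := ((vgn_commute (by omega)).mul_right (hx.commute h)).mul_right
    (vgn_commute (by omega))
  shift {a} h := by
    have hbraid := vgn_braid (n := n) (k := a) (by omega)
    calc vgn n a * vgn n (a + 1) * VirtualBraid.vConj x a * vgn n (a + 1) * vgn n a
        = (vgn n a * vgn n (a + 1) * vgn n a) * x a * (vgn n a * vgn n (a + 1) * vgn n a) := by
          simp only [VirtualBraid.vConj, mul_assoc]
      _ = vgn n (a + 1) * (vgn n a * vgn n (a + 1) * x a * vgn n (a + 1) * vgn n a) *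
            vgn n (a + 1) := by
          rw [hbraid]; simp only [mul_assoc]
      _ = VirtualBraid.vConj x (a + 1) := by rw [hx.shift h]; rfl

/-- The paper's `μ_{i,i+1} = σ_i v_i`. -/
def sigmaV (n a : ℕ) : VB n := sgn n a * vgn n a

lemma isLocalFamily_sigmaV : IsLocalFamily (sigmaV n) where
  commute h := (sgn_commute_vgn (by omega)).symm.mul_right (vgn_commute (by omega))
  shift {a} h := by
    have hσ : sgn n a = vgn n (a + 1) * (vgn n a * sgn n (a + 1) * vgn n a) * vgn n (a + 1) := by
      rw [vgn_sgn_vgn (by omega)]; simp [mul_assoc]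
    rw [sigmaV, sigmaV, hσ]
    simp only [mul_assoc, vgn_mul_cancel_left]
    rw [← mul_assoc (vgn n a), ← mul_assoc (vgn n a), vgn_braid (by omega)]
    simp [mul_assoc]

lemma swap_lt_swap {a b k : ℕ} (hab : a < b) (h : ¬ (a = k ∧ b = k + 1)) :
    Equiv.swap k (k + 1) a < Equiv.swap k (k + 1) b := by
  simp only [Equiv.swap_apply_def]; split_ifs <;> omega

/-- `x` placed on the ordered pair of strands `(i, j)`: for `i > j` the family `vConj x`, which is
`x` with its two strands exchanged, is carried to `(j, i)`. -/
def onPair (x : ℕ → VB n) (i j : ℕ) : VB n :=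
  if i < j then transport x i j else transport (vConj x) j i

lemma vgn_mul_onPair_mul_vgn (hx : IsLocalFamily x) {i j k : ℕ} (hij : i ≠ j) (hi : i < n)
    (hj : j < n) :
    vgn n k * onPair x i j * vgn n k =
      onPair x (Equiv.swap k (k + 1) i) (Equiv.swap k (k + 1) j) := by
  by_cases hflip : (i = k ∧ j = k + 1) ∨ (i = k + 1 ∧ j = k)
  · rcases hflip with ⟨rfl, rfl⟩ | ⟨rfl, rfl⟩
    · simp [onPair, transport_succ_self, vConj]
    · simp [onPair, transport_succ_self, vConj, mul_assoc]
  rcases Nat.lt_or_gt_of_ne hij with hlt | hlt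
  · have hs := swap_lt_swap (k := k) hlt (by omega)
    rw [onPair, onPair, if_pos hlt, if_pos hs, vgn_mul_transport_mul_vgn hx hlt hj (by omega)]
  · have hs := swap_lt_swap (k := k) hlt (by omega)
    rw [onPair, onPair, if_neg (by omega), if_neg (by omega),
      vgn_mul_transport_mul_vgn hx.vConj hlt hi (by omega)]

end Transport

section Generators

lemma muUp_eq_transport (a b : ℕ) : muUp n a b = transport (sigmaV n) a b := by
  rw [muUp, Nat.sub_sub, asc_eq_vDesc_inv, transport, sigmaV, vDesc]

lemma tw_succ_eq (a b : ℕ) : tw n a (b + 1) = (vDesc n a b)⁻¹ * vgn n b * vDesc n a b := by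
  rw [tw, show b + 1 - 1 - a = b - a by omega, asc_eq_vDesc_inv, Nat.add_sub_cancel, vDesc]
  congr 3 with k

lemma tw_eq_transport {a b : ℕ} (hab : a < b) (hb : b ≤ n - 1) :
    tw n a b = transport (vgn n) a b := by
  induction b, hab using Nat.le_induction with
  | base => rw [transport_succ_self, tw_succ_eq, vDesc_self]; group
  | succ b hab ih =>
    obtain ⟨c, rfl⟩ : ∃ c, b = c + 1 := ⟨b - 1, by omega⟩
    have hbraid := vgn_braid (n := n) (k := c) (by omega)
    have hE := commute_vDesc (n := n) (k := c + 1) (a := a) (b := c) (Or.inr le_rfl)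
    calc tw n a (c + 1 + 1)
        = (vDesc n a c)⁻¹ * (vgn n c * vgn n (c + 1) * vgn n c) * vDesc n a c := by
          rw [tw_succ_eq, vDesc_succ (by omega), mul_inv_rev, vgn_inv]; group
      _ = vgn n (c + 1) * tw n a (c + 1) * vgn n (c + 1) := by
          have h1 : vgn n (c + 1) * vDesc n a c = vDesc n a c * vgn n (c + 1) := hE.eq
          have h2 : (vDesc n a c)⁻¹ * vgn n (c + 1) = vgn n (c + 1) * (vDesc n a c)⁻¹ :=
            hE.inv_right.eq.symm
          rw [hbraid, tw_succ_eq]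
          simp only [mul_assoc, h1]
          rw [← mul_assoc, h2]
          simp only [mul_assoc]
      _ = transport (vgn n) a (c + 1 + 1) := by
          rw [ih (by omega), transport, transport, vDesc_succ (b := c + 1) (by omega)]
          simp only [mul_inv_rev, vgn_inv, mul_assoc]

lemma muG_eq_onPair {i j : ℕ} (hij : i ≠ j) (hi : i < n) :
    muG n i j = onPair (sigmaV n) i j := by
  rw [muG, onPair]
  split_ifs with h
  · exact muUp_eq_transport i j
  · rw [tw_eq_transport (by omega) (by omega), muUp_eq_transport]
    simp only [transport, vConj, mul_assoc, inv_mul_cancel_left]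

end Generators

section Permutation

variable {π : VB n →* Equiv.Perm (Fin n)}

lemma val_swap_pos0_pos1 (k : Fin (n - 1)) (x : Fin n) :
    (Equiv.swap (pos0 k) (pos1 k) x : ℕ) = Equiv.swap (k : ℕ) (k + 1) x := by
  simp only [Equiv.swap_apply_def, Fin.ext_iff, pos0, pos1]
  split_ifs <;> simp_all

lemma val_map_vgn_apply (hv : ∀ i : Fin (n - 1), π (vg i) = Equiv.swap (pos0 i) (pos1 i))
    {k : ℕ} (hk : k < n - 1) (x : Fin n) : (π (vgn n k) x : ℕ) = Equiv.swap k (k + 1) x := by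
  rw [show k = ((⟨k, hk⟩ : Fin (n - 1)) : ℕ) from rfl, vgn_val, hv, val_swap_pos0_pos1]

lemma val_map_vDesc_apply (hv : ∀ i : Fin (n - 1), π (vg i) = Equiv.swap (pos0 i) (pos1 i))
    {j b : ℕ} (hjb : j ≤ b) (hb : b < n) {x : Fin n} (hx : (x : ℕ) = j) :
    (π (vDesc n j b) x : ℕ) = b := by
  induction b, hjb using Nat.le_induction with
  | base => rw [vDesc_self, map_one]; exact hx
  | succ b hjb ih =>
    rw [vDesc_succ hjb, map_mul, Equiv.Perm.mul_apply, val_map_vgn_apply hv (by omega),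
      ih (by omega), Equiv.swap_apply_left]

lemma map_sgn (hπ : ∀ i : Fin (n - 1),
      π (σg i) = Equiv.swap (pos0 i) (pos1 i) ∧ π (vg i) = Equiv.swap (pos0 i) (pos1 i))
    (k : ℕ) : π (sgn n k) = π (vgn n k) := by
  by_cases hk : k < n - 1
  · rw [show k = ((⟨k, hk⟩ : Fin (n - 1)) : ℕ) from rfl, vgn_val, sgn_val, (hπ _).1,
      (hπ _).2]
  · simp [sgn, vgn, hk]

lemma map_onPair_eq_one {x : ℕ → VB n} (hx : ∀ a, π (x a) = 1) (i j : ℕ) :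
    π (onPair x i j) = 1 := by
  have hvx : ∀ a, π (vConj x a) = 1 := fun a => by
    rw [vConj, map_mul, map_mul, hx, mul_one, ← map_mul, vgn_mul_self, map_one]
  unfold onPair transport
  split_ifs <;> simp [hx, hvx]

def vSub (n m : ℕ) : Subgroup (VB n) := Subgroup.closure (vg '' {k | (k : ℕ) < m})

lemma vgn_mem_vSub {k m : ℕ} (hkm : k < m) (hk : k < n - 1) : vgn n k ∈ vSub n m :=
  Subgroup.subset_closure ⟨⟨k, hk⟩, hkm, (vgn_val ⟨k, hk⟩).symm⟩

lemma exists_mem_vSub_mul_vDesc {m : ℕ} {w : VB n} (hw : w ∈ vSub n (m + 1)) :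
    ∃ u ∈ vSub n m, ∃ j ≤ m + 1, w = u * vDesc n j (m + 1) := by
  have step : ∀ w : VB n, ∀ k : Fin (n - 1), (k : ℕ) < m + 1 →
      (∃ u ∈ vSub n m, ∃ j ≤ m + 1, w = u * vDesc n j (m + 1)) →
      ∃ u ∈ vSub n m, ∃ j ≤ m + 1, w * vg k = u * vDesc n j (m + 1) := by
    rintro w ⟨k, hk⟩ hkm ⟨u, hu, j, hj, rfl⟩
    simp only at hkm
    rw [← vgn_val]
    rcases (show k + 1 = j ∨ k = j ∨ k + 2 ≤ j ∨ j < k by omega) with rfl | rfl | hkj | hjk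
    · exact ⟨u, hu, k, by omega, by rw [mul_assoc, ← vDesc_eq_mul_vgn (by omega)]⟩
    · refine ⟨u, hu, k + 1, by omega, ?_⟩
      rw [vDesc_eq_mul_vgn (by omega), mul_assoc, mul_assoc, vgn_mul_self, mul_one]
    · refine ⟨u * vgn n k, mul_mem hu (vgn_mem_vSub (by omega) hk), j, hj, ?_⟩
      rw [mul_assoc, mul_assoc, (commute_vDesc (Or.inl hkj)).eq]
    · obtain ⟨k, rfl⟩ : ∃ k', k = k' + 1 := ⟨k - 1, by omega⟩
      refine ⟨u * vgn n k, mul_mem hu (vgn_mem_vSub (by omega) (by omega)), j, hj, ?_⟩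
      rw [mul_assoc, mul_assoc, vgn_mul_vDesc (by omega) (by omega) (by omega)]
  induction hw using Subgroup.closure_induction_right with
  | one => exact ⟨1, one_mem _, m + 1, le_rfl, by rw [vDesc_self, mul_one]⟩
  | mul_right w _ _ hy ih =>
    obtain ⟨k, hk, rfl⟩ := hy
    exact step w k hk ih
  | mul_inv_cancel w _ _ hy ih =>
    obtain ⟨k, hk, rfl⟩ := hy
    rw [← vgn_val, vgn_inv, vgn_val]
    exact step w k hk ih

lemma map_apply_of_mem_vSub (hv : ∀ i : Fin (n - 1), π (vg i) = Equiv.swap (pos0 i) (pos1 i))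
    {m : ℕ} {w : VB n} (hw : w ∈ vSub n m) {x : Fin n} (hx : m < x) : π w x = x := by
  suffices vSub n m ≤ (MulAction.stabilizer (Equiv.Perm (Fin n)) x).comap π from this hw
  refine Subgroup.closure_le _ |>.mpr ?_
  rintro _ ⟨k, hk, rfl⟩
  change (k : ℕ) < m at hk
  simp only [SetLike.mem_coe, Subgroup.mem_comap, MulAction.mem_stabilizer_iff,
    Equiv.Perm.smul_def, hv]
  exact Equiv.swap_apply_of_ne_of_ne (by simp [Fin.ext_iff, pos0]; omega)
    (by simp [Fin.ext_iff, pos1]; omega)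

lemma eq_one_of_mem_vSub (hv : ∀ i : Fin (n - 1), π (vg i) = Equiv.swap (pos0 i) (pos1 i))
    {m : ℕ} (hm : m ≤ n - 1) {w : VB n} (hw : w ∈ vSub n m) (h1 : π w = 1) : w = 1 := by
  induction m generalizing w with
  | zero =>
    simpa [vSub] using hw
  | succ m ih =>
    obtain ⟨u, hu, j, hj, rfl⟩ := exists_mem_vSub_mul_vDesc hw
    have hj' : j = m + 1 := by
      have hD : π (vDesc n j (m + 1)) ⟨j, by omega⟩ = ⟨m + 1, by omega⟩ :=
        Fin.ext (val_map_vDesc_apply hv hj (by omega) rfl)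
      have hu' : π u ⟨m + 1, by omega⟩ = ⟨m + 1, by omega⟩ :=
        map_apply_of_mem_vSub hv hu (Nat.lt_succ_self m)
      have := congrArg (fun p : Equiv.Perm (Fin n) => (p ⟨j, by omega⟩ : ℕ)) h1
      simpa [hD, hu'] using this.symm
    subst hj'
    rw [vDesc_self, mul_one] at h1 ⊢
    exact ih (by omega) hu h1

end Permutation

section PureSubgroup

def muSet (n : ℕ) : Set (VB n) := { g : VB n | ∃ i j : Fin n, i ≠ j ∧ g = muG n i j }

lemma vg_mul_muG_mul_vg (k : Fin (n - 1)) {i j : Fin n} (hij : i ≠ j) :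
    vg k * muG n i j * vg k =
      muG n (Equiv.swap (pos0 k) (pos1 k) i) (Equiv.swap (pos0 k) (pos1 k) j) := by
  have hij' : Equiv.swap (pos0 k) (pos1 k) i ≠ Equiv.swap (pos0 k) (pos1 k) j :=
    (Equiv.injective _).ne hij
  rw [← vgn_val, muG_eq_onPair (Fin.val_ne_of_ne hij) i.2,
    muG_eq_onPair (Fin.val_ne_of_ne hij') (Fin.is_lt _),
    val_swap_pos0_pos1, val_swap_pos0_pos1]
  exact vgn_mul_onPair_mul_vgn isLocalFamily_sigmaV (Fin.val_ne_of_ne hij) i.2 j.2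

lemma muG_succ_mul_vg (k : Fin (n - 1)) : muG n k (k + 1) * vg k = σg k := by
  rw [muG, if_pos (Nat.lt_succ_self _), muUp_eq_transport, transport_succ_self, sigmaV,
    vgn_val, sgn_val, mul_assoc, ← vgn_val, vgn_mul_self, mul_one]

lemma muG_succ_mem_muSet (k : Fin (n - 1)) : muG n k (k + 1) ∈ muSet n :=
  ⟨pos0 k, pos1 k, by simp [pos0, pos1, Fin.ext_iff], rfl⟩

lemma vg_mem_normalizer_muSet (k : Fin (n - 1)) : vg k ∈ Subgroup.normalizer (muSet n) := by
  have hconj : ∀ g ∈ muSet n, vg k * g * (vg k)⁻¹ ∈ muSet n := by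
    rintro _ ⟨i, j, hij, rfl⟩
    rw [← vgn_val, vgn_inv, vgn_val, vg_mul_muG_mul_vg k hij]
    exact ⟨_, _, (Equiv.injective _).ne hij, rfl⟩
  refine Subgroup.mem_set_normalizer_iff.mpr fun g => ⟨hconj g, fun hg => ?_⟩
  simpa [← vgn_val, vgn_inv, mul_assoc] using hconj _ hg

lemma closure_muSet_normal : (Subgroup.closure (muSet n)).Normal := by
  rw [← Subgroup.normalizer_eq_top_iff, eq_top_iff, ← PresentedGroup.closure_range_of,
    Subgroup.closure_le]
  rintro _ ⟨k | k, rfl⟩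
  · change σg k ∈ _
    rw [← muG_succ_mul_vg]
    exact mul_mem (Subgroup.le_normalizer (Subgroup.subset_closure (muG_succ_mem_muSet k)))
      (Subgroup.normalizer_le_normalizer_closure _ (vg_mem_normalizer_muSet k))
  · exact Subgroup.normalizer_le_normalizer_closure _ (vg_mem_normalizer_muSet k)

lemma closure_muSet_sup_vSub : Subgroup.closure (muSet n) ⊔ vSub n (n - 1) = ⊤ := by
  rw [eq_top_iff, ← PresentedGroup.closure_range_of, Subgroup.closure_le]
  have hv : ∀ k : Fin (n - 1), vg k ∈ Subgroup.closure (muSet n) ⊔ vSub n (n - 1) := fun k =>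
    Subgroup.mem_sup_right (Subgroup.subset_closure ⟨k, k.2, rfl⟩)
  rintro _ ⟨k | k, rfl⟩
  · change σg k ∈ _
    rw [← muG_succ_mul_vg]
    exact mul_mem (Subgroup.mem_sup_left (Subgroup.subset_closure (muG_succ_mem_muSet k))) (hv k)
  · exact hv k

lemma closure_muSet_le_ker {π : VB n →* Equiv.Perm (Fin n)} (hπ : ∀ i : Fin (n - 1),
      π (σg i) = Equiv.swap (pos0 i) (pos1 i) ∧ π (vg i) = Equiv.swap (pos0 i) (pos1 i)) :
    Subgroup.closure (muSet n) ≤ π.ker := by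
  have hσv : ∀ a, π (sigmaV n a) = 1 := fun a => by
    rw [sigmaV, map_mul, map_sgn hπ, ← map_mul, vgn_mul_self, map_one]
  refine (Subgroup.closure_le _).mpr ?_
  rintro _ ⟨i, j, hij, rfl⟩
  rw [SetLike.mem_coe, MonoidHom.mem_ker, muG_eq_onPair (Fin.val_ne_of_ne hij) i.2]
  exact map_onPair_eq_one hσv _ _

end PureSubgroup

end VirtualBraid

/-- The pure virtual braid group `VP_n = ker(π : VB_n → S_n)` is generated by the
connecting strings `μ_{ij}` for all `i ≠ j`. -/
theorem stmt_9 (n : ℕ) (π : VB n →* Equiv.Perm (Fin n))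
    (hπ : ∀ i : Fin (n-1),
        π (σg i) = Equiv.swap (pos0 i) (pos1 i) ∧
        π (vg i) = Equiv.swap (pos0 i) (pos1 i)) :
    MonoidHom.ker π =
      Subgroup.closure { g : VB n | ∃ i j : Fin n, i ≠ j ∧ g = muG n i j } := by
  refine le_antisymm (fun g hg => ?_) (VirtualBraid.closure_muSet_le_ker hπ)
  have := VirtualBraid.closure_muSet_normal (n := n)
  obtain ⟨h, hh, w, hw, rfl⟩ := Subgroup.mem_sup_of_normal_left.mp
    (VirtualBraid.closure_muSet_sup_vSub ▸ Subgroup.mem_top g)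
  have hπh : π h = 1 := VirtualBraid.closure_muSet_le_ker hπ hh
  have hπw : π w = 1 := by simpa [hπh] using hg
  rw [VirtualBraid.eq_one_of_mem_vSub (fun i => (hπ i).2) le_rfl hw hπw, mul_one]
  exact hh
end

section
/- Let G be a group containing elements v_1,...,v_{n-1} satisfying the symmetric group relations (braid-like relations, distant commutation, and v_i^2 = 1), and let μ_{12} be an element of G satisfying: μ_{12} commutes with v_j for j > 2; the stringy braid relation μ_{12}·(v_2 μ_{12} v_2)·(v_1 v_2 μ_{12} v_2 v_1) = (v_1 v_2 μ_{12} v_2 v_1)·(v_2 μ_{12} v_2)·μ_{12}; and μ_{12} commutes with v_2 v_3 v_1 v_2 μ_{12} v_2 v_1 v_3 v_2. Then setting σ_1 := μ_{12} v_1 and σ_j := (v_{j-1}···v_1)(v_j···v_2) σ_1 (v_2···v_j)(v_1···v_{j-1}), the elements σ_i and v_i satisfy all defining relations of the virtual braid group VB_n. -/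
private lemma tq_inv {G : Type*} [Group G] {a : G} (h : a * a = 1) :
    ∀ t : G, a * (a * t) = t := fun t => by rw [← mul_assoc, h, one_mul]

private lemma tq_comm {G : Type*} [Group G] {a b : G} (h : a * b = b * a) :
    ∀ t : G, a * (b * t) = b * (a * t) := fun t => by
  rw [← mul_assoc, h, mul_assoc]

private lemma tq_braid {G : Type*} [Group G] {a b : G} (h : a * b * a = b * a * b) :
    ∀ t : G, a * (b * (a * t)) = b * (a * (b * t)) := fun t => by
  rw [← mul_assoc, ← mul_assoc, h, mul_assoc, mul_assoc]

private lemma braid' {G : Type*} [Group G] {a b : G} (h : a * b * a = b * a * b) :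
    a * (b * a) = b * (a * b) := by rw [← mul_assoc, h, mul_assoc]

private lemma lem_L1 {G : Type*} [Group G] {a b c x : G}
    (ha : a * a = 1) (hc : c * c = 1)
    (hab : a * b * a = b * a * b) (hbc : b * c * b = c * b * c)
    (hac : a * c = c * a) (hxc : x * c = c * x) :
    a * (b*(c*(a*(b*(x*(b*(a*(c*b)))))))) = b*(c*(a*(b*(x*(b*(a*(c*(b*a)))))))) := by
  have key : a * (b*(c*(a*(b*(x*(b*(a*(c*(b*a))))))))) = b*(c*(a*(b*(x*(b*(a*(c*b))))))) := by
    calc a * (b*(c*(a*(b*(x*(b*(a*(c*(b*a)))))))))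
        = a*(b*(a*(c*(b*(x*(b*(a*(c*(b*a))))))))) := by rw [← tq_comm hac]
      _ = b*(a*(b*(c*(b*(x*(b*(a*(c*(b*a))))))))) := by rw [tq_braid hab]
      _ = b*(a*(b*(c*(b*(x*(b*(c*(a*(b*a))))))))) := by rw [tq_comm hac]
      _ = b*(a*(b*(c*(b*(x*(b*(c*(b*(a*b))))))))) := by rw [braid' hab]
      _ = b*(a*(c*(b*(c*(x*(b*(c*(b*(a*b))))))))) := by rw [tq_braid hbc]
      _ = b*(a*(c*(b*(c*(x*(c*(b*(c*(a*b))))))))) := by rw [tq_braid hbc]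
      _ = b*(a*(c*(b*(x*(c*(c*(b*(c*(a*b))))))))) := by rw [tq_comm hxc.symm]
      _ = b*(a*(c*(b*(x*(b*(c*(a*b))))))) := by rw [tq_inv hc]
      _ = b*(a*(c*(b*(x*(b*(a*(c*b))))))) := by rw [tq_comm hac.symm]
      _ = b*(c*(a*(b*(x*(b*(a*(c*b))))))) := by rw [tq_comm hac]
  calc a * (b*(c*(a*(b*(x*(b*(a*(c*b))))))))
      = a * (b*(c*(a*(b*(x*(b*(a*(c*(b*(a*a)))))))))) := by rw [ha, mul_one]
    _ = (a * (b*(c*(a*(b*(x*(b*(a*(c*(b*a)))))))))) * a := by simp only [mul_assoc]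
    _ = (b*(c*(a*(b*(x*(b*(a*(c*b)))))))) * a := by rw [key]
    _ = b*(c*(a*(b*(x*(b*(a*(c*(b*a)))))))) := by simp only [mul_assoc]

private lemma conj_braid' {G : Type*} [Group G] {x y X Y w u : G}
    (hw : w * u = 1) (hX : X = w * x * u) (hY : Y = w * y * u)
    (h : x * y * x = y * x * y) : X * Y * X = Y * X * Y := by
  have hu : u = w⁻¹ := (inv_eq_of_mul_eq_one_right hw).symm
  subst hu; subst hX; subst hY
  calc w*x*w⁻¹*(w*y*w⁻¹)*(w*x*w⁻¹) = w*(x*y*x)*w⁻¹ := by group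
    _ = w*(y*x*y)*w⁻¹ := by rw [h]
    _ = w*y*w⁻¹*(w*x*w⁻¹)*(w*y*w⁻¹) := by group

private lemma comm_assemble {G : Type*} [Group G] {A a X c : G}
    (h1 : A*X = X*A) (h2 : A*c = c*A) (h3 : a*X = X*a) (h4 : a*c = c*a) :
    (A*a)*(X*c) = (X*c)*(A*a) := by
  simp only [mul_assoc]
  rw [tq_comm h3, tq_comm h1, h4, tq_comm h2]

private lemma comm_cancel {G : Type*} [Group G] {x X c : G}
    (h : x * (X * c) = (X * c) * x) (hxc : x * c = c * x) : x * X = X * x := by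
  apply mul_right_cancel (b := c)
  calc x * X * c = x * (X * c) := by rw [mul_assoc]
    _ = X * c * x := h
    _ = X * (c * x) := by rw [mul_assoc]
    _ = X * (x * c) := by rw [hxc]
    _ = X * x * c := by rw [mul_assoc]

/-- If `G` contains elements `v_1,…,v_{n-1}` satisfying the symmetric group relations,
and `μ_12 ∈ G` commutes with `v_j` for `j > 2`, satisfies the stringy braid relation
`μ_12 (v_2 μ_12 v_2)(v_1 v_2 μ_12 v_2 v_1) = (v_1 v_2 μ_12 v_2 v_1)(v_2 μ_12 v_2) μ_12`
and commutes with `v_2 v_3 v_1 v_2 μ_12 v_2 v_1 v_3 v_2`, then setting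
`σ_1 := μ_12 v_1` and `σ_j := (v_{j-1}···v_1)(v_j···v_2) σ_1 (v_2···v_j)(v_1···v_{j-1})`,
the elements `σ_i, v_i` satisfy all the defining relations of `VB_n`. -/
theorem stmt_10 (n : ℕ) (G : Type*) [Group G] (v : ℕ → G) (μ : G)
    (hS1 : ∀ i, 1 ≤ i → i + 2 ≤ n → v i * v (i+1) * v i = v (i+1) * v i * v (i+1))
    (hS2 : ∀ i j, 1 ≤ i → i + 2 ≤ j → j + 1 ≤ n → v i * v j = v j * v i)
    (hS3 : ∀ i, 1 ≤ i → i + 1 ≤ n → v i * v i = 1)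
    (hcomm : ∀ j, 3 ≤ j → j + 1 ≤ n → μ * v j = v j * μ)
    (hyb : μ * (v 2 * μ * v 2) * (v 1 * v 2 * μ * v 2 * v 1) =
           (v 1 * v 2 * μ * v 2 * v 1) * (v 2 * μ * v 2) * μ)
    (hcom4 : μ * (v 2 * v 3 * v 1 * v 2 * μ * v 2 * v 1 * v 3 * v 2) =
             (v 2 * v 3 * v 1 * v 2 * μ * v 2 * v 1 * v 3 * v 2) * μ)
    (σ : ℕ → G)
    (hσ : ∀ j, σ j = ((List.range (j-1)).map (fun k => v (j-1-k))).prod *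
                     ((List.range (j-1)).map (fun k => v (j-k))).prod *
                     (μ * v 1) *
                     ((List.range (j-1)).map (fun k => v (2+k))).prod *
                     ((List.range (j-1)).map (fun k => v (1+k))).prod) :
    (∀ i, 1 ≤ i → i + 2 ≤ n → σ i * σ (i+1) * σ i = σ (i+1) * σ i * σ (i+1)) ∧
    (∀ i j, 1 ≤ i → i + 2 ≤ j → j + 1 ≤ n → σ i * σ j = σ j * σ i) ∧
    (∀ i, 1 ≤ i → i + 2 ≤ n → v i * v (i+1) * v i = v (i+1) * v i * v (i+1)) ∧
    (∀ i j, 1 ≤ i → i + 2 ≤ j → j + 1 ≤ n → v i * v j = v j * v i) ∧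
    (∀ i, 1 ≤ i → i + 1 ≤ n → v i * v i = 1) ∧
    (∀ i, 1 ≤ i → i + 2 ≤ n → v i * σ (i+1) * v i = v (i+1) * σ i * v (i+1)) ∧
    (∀ i j, 1 ≤ i → 1 ≤ j → i + 1 ≤ n → j + 1 ≤ n → (i + 2 ≤ j ∨ j + 2 ≤ i) →
      σ i * v j = v j * σ i) := by
  have hσ1 : σ 1 = μ * v 1 := by simpa using hσ 1
  -- the key recursion
  have L0 : ∀ j, 1 ≤ j → j + 2 ≤ n →
      σ (j+1) = v j * v (j+1) * σ j * v (j+1) * v j := by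
    intro j hj hjn
    obtain ⟨m, rfl⟩ : ∃ m, j = m + 1 := ⟨j - 1, by omega⟩
    have h2 := hσ (m+2)
    have h1 := hσ (m+1)
    rw [show m+2-1 = m+1 from rfl] at h2
    rw [show m+1-1 = m from rfl] at h1
    have e1 : ((List.range (m+1)).map (fun k => v (m+1-k))).prod =
        v (m+1) * ((List.range m).map (fun k => v (m-k))).prod := by
      rw [List.range_succ_eq_map, List.map_cons, List.prod_cons, List.map_map]
      congr 1
      refine congrArg List.prod (List.map_congr_left ?_)
      intro k _
      simp only [Function.comp_apply]
      congr 1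
      omega
    have e2 : ((List.range (m+1)).map (fun k => v (m+2-k))).prod =
        v (m+2) * ((List.range m).map (fun k => v (m+1-k))).prod := by
      rw [List.range_succ_eq_map, List.map_cons, List.prod_cons, List.map_map]
      congr 1
      refine congrArg List.prod (List.map_congr_left ?_)
      intro k _
      simp only [Function.comp_apply]
      congr 1
      omega
    have e3 : ((List.range (m+1)).map (fun k => v (2+k))).prod =
        ((List.range m).map (fun k => v (2+k))).prod * v (m+2) := by
      rw [List.range_succ, List.map_append, List.prod_append]
      simp [show 2+m = m+2 by omega]
    have e4 : ((List.range (m+1)).map (fun k => v (1+k))).prod =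
        ((List.range m).map (fun k => v (1+k))).prod * v (m+1) := by
      rw [List.range_succ, List.map_append, List.prod_append]
      simp [show 1+m = m+1 by omega]
    rw [e1, e2, e3, e4] at h2
    have cA : Commute (v (m+2)) (((List.range m).map (fun k => v (m-k))).prod) := by
      apply Commute.list_prod_right
      intro x hx
      simp only [List.mem_map, List.mem_range] at hx
      obtain ⟨k, hk, rfl⟩ := hx
      exact (hS2 (m-k) (m+2) (by omega) (by omega) (by omega)).symm
    have cD : Commute (v (m+2)) (((List.range m).map (fun k => v (1+k))).prod) := by
      apply Commute.list_prod_right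
      intro x hx
      simp only [List.mem_map, List.mem_range] at hx
      obtain ⟨k, hk, rfl⟩ := hx
      exact (hS2 (1+k) (m+2) (by omega) (by omega) (by omega)).symm
    rw [h2, h1]
    simp only [mul_assoc]
    rw [tq_comm cA.eq.symm, tq_comm cD.eq]
  -- M2, case j ≥ i+2
  have M2a : ∀ i j, 1 ≤ i → i + 2 ≤ j → j + 1 ≤ n → σ i * v j = v j * σ i := by
    intro i j hi hij hjn
    have key : Commute (v j) (σ i) := by
      rw [hσ i]
      have c1 : Commute (v j) (((List.range (i-1)).map (fun k => v (i-1-k))).prod) := by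
        apply Commute.list_prod_right
        intro x hx
        simp only [List.mem_map, List.mem_range] at hx
        obtain ⟨k, hk, rfl⟩ := hx
        exact (hS2 (i-1-k) j (by omega) (by omega) (by omega)).symm
      have c2 : Commute (v j) (((List.range (i-1)).map (fun k => v (i-k))).prod) := by
        apply Commute.list_prod_right
        intro x hx
        simp only [List.mem_map, List.mem_range] at hx
        obtain ⟨k, hk, rfl⟩ := hx
        exact (hS2 (i-k) j (by omega) (by omega) (by omega)).symm
      have c3 : Commute (v j) (((List.range (i-1)).map (fun k => v (2+k))).prod) := by
        apply Commute.list_prod_right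
        intro x hx
        simp only [List.mem_map, List.mem_range] at hx
        obtain ⟨k, hk, rfl⟩ := hx
        exact (hS2 (2+k) j (by omega) (by omega) (by omega)).symm
      have c4 : Commute (v j) (((List.range (i-1)).map (fun k => v (1+k))).prod) := by
        apply Commute.list_prod_right
        intro x hx
        simp only [List.mem_map, List.mem_range] at hx
        obtain ⟨k, hk, rfl⟩ := hx
        exact (hS2 (1+k) j (by omega) (by omega) (by omega)).symm
      have c12 : Commute (v j) (μ * v 1) :=
        Commute.mul_right ((hcomm j (by omega) hjn).symm)
          ((hS2 1 j (by omega) (by omega) hjn).symm)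
      exact (((c1.mul_right c2).mul_right c12).mul_right c3).mul_right c4
    exact key.symm.eq
  -- M2, case i ≥ j+2
  have M2b : ∀ i k, 1 ≤ k → k + 2 ≤ i → i + 1 ≤ n → v k * σ i = σ i * v k := by
    intro i
    induction i using Nat.strong_induction_on with
    | _ i IH =>
      intro k hk hki hin
      rcases Nat.lt_or_ge (k+2) i with hlt | hge
      · obtain ⟨m, rfl⟩ : ∃ m, i = m + 1 := ⟨i - 1, by omega⟩
        have e1 : σ (m+1) = v m * v (m+1) * σ m * v (m+1) * v m := L0 m (by omega) (by omega)
        have c1 : v k * v m = v m * v k := hS2 k m hk (by omega) (by omega)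
        have c2 : v k * v (m+1) = v (m+1) * v k := hS2 k (m+1) hk (by omega) (by omega)
        have c3 : v k * σ m = σ m * v k := IH m (by omega) k hk (by omega) (by omega)
        rw [e1]; simp only [mul_assoc]
        rw [tq_comm c1, tq_comm c2, tq_comm c3, tq_comm c2, c1]
      · have hik : i = k + 2 := by omega
        subst hik
        have e1 : σ (k+2) = v (k+1) * v (k+2) * σ (k+1) * v (k+2) * v (k+1) :=
          L0 (k+1) (by omega) (by omega)
        have e2 : σ (k+1) = v k * v (k+1) * σ k * v (k+1) * v k := L0 k hk (by omega)
        rw [e1, e2]; simp only [mul_assoc]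
        exact lem_L1 (hS3 k hk (by omega)) (hS3 (k+2) (by omega) (by omega))
          (hS1 k hk (by omega)) (hS1 (k+1) (by omega) (by omega))
          (hS2 k (k+2) hk (by omega) (by omega)) (M2a k (k+2) hk (by omega) (by omega))
  -- M1
  have M1 : ∀ i, 1 ≤ i → i + 2 ≤ n → v i * σ (i+1) * v i = v (i+1) * σ i * v (i+1) := by
    intro i hi hin
    rw [L0 i hi hin]
    simp only [mul_assoc]
    rw [tq_inv (hS3 i hi (by omega)), hS3 i hi (by omega), mul_one]
  -- B2 base: σ1 and σ3
  have q13 : 4 ≤ n → σ 1 * σ 3 = σ 3 * σ 1 := by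
    intro hn
    have e2 : σ 2 = v 1 * v 2 * σ 1 * v 2 * v 1 := L0 1 le_rfl (by omega)
    have e3 : σ 3 = v 2 * v 3 * σ 2 * v 3 * v 2 := L0 2 (by omega) (by omega)
    have hab1 : v 1 * v 2 * v 1 = v 2 * v 1 * v 2 := hS1 1 le_rfl (by omega)
    have hbc1 : v 2 * v 3 * v 2 = v 3 * v 2 * v 3 := hS1 2 (by omega) (by omega)
    have hX : σ 3 = (v 2 * v 3 * v 1 * v 2 * μ * v 2 * v 1 * v 3 * v 2) * v 3 := by
      rw [e3, e2, hσ1]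
      simp only [mul_assoc]
      rw [tq_braid hab1, braid' hbc1]
    have haX : v 1 * (v 2 * v 3 * v 1 * v 2 * μ * v 2 * v 1 * v 3 * v 2) =
        (v 2 * v 3 * v 1 * v 2 * μ * v 2 * v 1 * v 3 * v 2) * v 1 := by
      have h31 := M2b 3 1 le_rfl (by omega) (by omega)
      rw [hX] at h31
      exact comm_cancel (by rw [← mul_assoc] at h31 ⊢; exact h31)
        (hS2 1 3 le_rfl le_rfl (by omega))
    rw [hσ1, hX]
    exact comm_assemble hcom4 (hcomm 3 (by omega) (by omega)) haX
      (hS2 1 3 le_rfl le_rfl (by omega))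
  -- B2 adjacent distance 2
  have Qadj : ∀ i, 1 ≤ i → i + 3 ≤ n → σ i * σ (i+2) = σ (i+2) * σ i := by
    intro i hi
    induction i, hi using Nat.le_induction with
    | base => intro hn; exact q13 (by omega)
    | succ i hi IH =>
      intro hn
      have hIH := IH (by omega)
      have h1 : σ (i+1) = v i * v (i+1) * σ i * v (i+1) * v i := L0 i hi (by omega)
      have h3 : σ (i+3) = v (i+2) * v (i+3) * σ (i+2) * v (i+3) * v (i+2) :=
        L0 (i+2) (by omega) (by omega)
      have ca2 : Commute (σ i) (v (i+2)) := M2a i (i+2) hi (by omega) (by omega)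
      have ca3 : Commute (σ i) (v (i+3)) := M2a i (i+3) hi (by omega) (by omega)
      have cIH : Commute (σ i) (σ (i+2)) := hIH
      have c13 : Commute (σ i) (σ (i+3)) := by
        rw [h3]
        exact (((ca2.mul_right ca3).mul_right cIH).mul_right ca3).mul_right ca2
      have cb0 : Commute (v i) (σ (i+3)) := M2b (i+3) i hi (by omega) (by omega)
      have cb1 : Commute (v (i+1)) (σ (i+3)) := M2b (i+3) (i+1) (by omega) (by omega) (by omega)
      have final : Commute (σ (i+1)) (σ (i+3)) := by
        rw [h1]
        exact (((cb0.mul_left cb1).mul_left c13).mul_left cb1).mul_left cb0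
      exact final.eq
  -- B2 general
  have B2 : ∀ i j, 1 ≤ i → i + 2 ≤ j → j + 1 ≤ n → σ i * σ j = σ j * σ i := by
    intro i j hi hij
    induction j, hij using Nat.le_induction with
    | base => intro h; exact Qadj i hi (by omega)
    | succ j hj IH =>
      intro hn
      have h1 : σ (j+1) = v j * v (j+1) * σ j * v (j+1) * v j := L0 j (by omega) (by omega)
      have c0 : Commute (σ i) (v j) := M2a i j hi hj (by omega)
      have c1 : Commute (σ i) (v (j+1)) := M2a i (j+1) hi (by omega) (by omega)
      have c2 : Commute (σ i) (σ j) := IH (by omega)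
      have final : Commute (σ i) (σ (j+1)) := by
        rw [h1]
        exact (((c0.mul_right c1).mul_right c2).mul_right c1).mul_right c0
      exact final.eq
  -- B1
  have B1 : ∀ i, 1 ≤ i → i + 2 ≤ n → σ i * σ (i+1) * σ i = σ (i+1) * σ i * σ (i+1) := by
    intro i hi
    induction i, hi using Nat.le_induction with
    | base =>
      intro hn
      have e2 : σ 2 = v 1 * v 2 * σ 1 * v 2 * v 1 := L0 1 le_rfl (by omega)
      have ha : v 1 * v 1 = 1 := hS3 1 le_rfl (by omega)
      have hb : v 2 * v 2 = 1 := hS3 2 (by omega) (by omega)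
      have hab : v 1 * v 2 * v 1 = v 2 * v 1 * v 2 := hS1 1 le_rfl (by omega)
      have hyb' : ∀ t, μ*(v 2*(μ*(v 2*(v 1*(v 2*(μ*(v 2*(v 1*t)))))))) =
          v 1*(v 2*(μ*(v 2*(v 1*(v 2*(μ*(v 2*(μ*t)))))))) := by
        intro t
        calc μ*(v 2*(μ*(v 2*(v 1*(v 2*(μ*(v 2*(v 1*t))))))))
            = (μ * (v 2 * μ * v 2) * (v 1 * v 2 * μ * v 2 * v 1)) * t := by
              simp only [mul_assoc]
          _ = ((v 1 * v 2 * μ * v 2 * v 1) * (v 2 * μ * v 2) * μ) * t := by rw [hyb]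
          _ = v 1*(v 2*(μ*(v 2*(v 1*(v 2*(μ*(v 2*(μ*t)))))))) := by simp only [mul_assoc]
      have left_eq : σ 1 * σ 2 * σ 1 = μ*(v 2*(μ*(v 2*(v 1*(v 2*(μ*v 1)))))) := by
        rw [e2, hσ1]
        simp only [mul_assoc]
        rw [tq_inv ha, tq_braid hab]
      have right_eq : σ 2 * σ 1 * σ 2 =
          v 1*(v 2*(μ*(v 2*(v 1*(v 2*(μ*(v 2*(μ*(v 2*(v 1*v 2)))))))))) := by
        rw [e2, hσ1]
        simp only [mul_assoc]
        rw [tq_inv ha, tq_braid hab, braid' hab]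
      have mid : μ*(v 2*(μ*(v 2*(v 1*(v 2*(μ*v 1)))))) =
          v 1*(v 2*(μ*(v 2*(v 1*(v 2*(μ*(v 2*(μ*(v 2*(v 1*v 2)))))))))) := by
        calc μ*(v 2*(μ*(v 2*(v 1*(v 2*(μ*v 1))))))
            = μ*(v 2*(μ*(v 2*(v 1*(v 2*(μ*(v 2*(v 1*(v 1*(v 2*v 1)))))))))) := by
              rw [tq_inv ha, tq_inv hb]
          _ = v 1*(v 2*(μ*(v 2*(v 1*(v 2*(μ*(v 2*(μ*(v 1*(v 2*v 1)))))))))) := hyb' _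
          _ = v 1*(v 2*(μ*(v 2*(v 1*(v 2*(μ*(v 2*(μ*(v 2*(v 1*v 2)))))))))) := by
              rw [braid' hab]
      rw [left_eq, right_eq]; exact mid
    | succ i hi IH =>
      intro hn
      have hbr := IH (by omega)
      have hw : (v i * v (i+1) * v (i+2)) * (v (i+2) * v (i+1) * v i) = 1 := by
        simp only [mul_assoc]
        rw [tq_inv (hS3 (i+2) (by omega) (by omega)), tq_inv (hS3 (i+1) (by omega) (by omega))]
        exact hS3 i (by omega) (by omega)
      have hXe : σ (i+1) = (v i * v (i+1) * v (i+2)) * σ i * (v (i+2) * v (i+1) * v i) := by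
        rw [L0 i hi (by omega)]
        simp only [mul_assoc]
        rw [tq_comm (M2a i (i+2) hi (by omega) (by omega)).symm,
          tq_inv (hS3 (i+2) (by omega) (by omega))]
      have hYe : σ (i+2) = (v i * v (i+1) * v (i+2)) * σ (i+1) * (v (i+2) * v (i+1) * v i) := by
        have key : v i * σ (i+2) = σ (i+2) * v i := M2b (i+2) i (by omega) (by omega) (by omega)
        have e : v i * σ (i+2) * v i = σ (i+2) := by
          rw [key, mul_assoc, hS3 i (by omega) (by omega), mul_one]
        have hL : σ (i+2) = v (i+1) * v (i+2) * σ (i+1) * v (i+2) * v (i+1) :=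
          L0 (i+1) (by omega) (by omega)
        conv_lhs => rw [← e]
        rw [hL]
        simp only [mul_assoc]
      exact conj_braid' hw hXe hYe hbr
  refine ⟨B1, B2, hS1, hS2, hS3, M1, ?_⟩
  intro i j hi hj hin hjn hd
  rcases hd with h | h
  · exact M2a i j hi h hjn
  · exact (M2b i j hj h hin).symm
end

section
/- In a ribbon Hopf algebra A with special grouplike element G and Drinfeld element u = Σ s(e')e (where ρ = Σ e ⊗ e'), the square of the antipode is conjugation by G: s²(x) = G x G^{-1} for all x ∈ A, and the central element v = G^{-1}u satisfies s(v) = v. -/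
/-! Conjugation by `u` and by `G` agree because they differ by conjugation by the central
element `v = G⁻¹u`. Hence `s(G⁻¹) = s²(G) = G`, and since `s` is an antihomomorphism,
`s(v) = s(u) s(G⁻¹) = G⁻¹ u G⁻¹ G = v`. -/

open scoped TensorProduct

open HopfAlgebra

theorem conj_eq_conj_of_commute {M : Type*} [Monoid M] {u u' g g' x : M}
    (hu : u * u' = 1) (hg : g * g' = 1) (hx : Commute (g' * u) x) :
    u * x * u' = g * x * g' :=
  calc u * x * u' = g * ((g' * u) * x) * u' := by rw [← mul_assoc g, ← mul_assoc g, hg, one_mul]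
    _ = g * (x * (g' * u)) * u' := by rw [hx.eq]
    _ = g * x * g' * (u * u') := by simp only [mul_assoc]
    _ = g * x * g' := by rw [hu, mul_one]

theorem stmt_18_general (k A : Type*) [CommRing k] [Ring A] [HopfAlgebra k A]
    (u u' G G' : A)
    (hu : u * u' = 1 ∧ u' * u = 1)
    (hG : G * G' = 1 ∧ G' * G = 1)
    (hGgrp : Coalgebra.comul (R := k) G = G ⊗ₜ[k] G ∧
      Coalgebra.counit (R := k) G = (1 : k) ∧
      HopfAlgebra.antipode (R := k) G = G')
    (hs2 : ∀ x : A, HopfAlgebra.antipode (R := k) (HopfAlgebra.antipode (R := k) x) =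
      u * x * u')
    (hcentral : ∀ x : A, (G' * u) * x = x * (G' * u))
    (hsu : HopfAlgebra.antipode (R := k) u = G' * u * G') :
    (∀ x : A, HopfAlgebra.antipode (R := k) (HopfAlgebra.antipode (R := k) x) =
      G * x * G') ∧
    HopfAlgebra.antipode (R := k) (G' * u) = G' * u := by
  have hs2G : ∀ x : A, antipode k (antipode k x) = G * x * G' := fun x =>
    (hs2 x).trans (conj_eq_conj_of_commute hu.1 hG.1 (hcentral x))
  have hsG' : antipode k G' = G := by
    rw [← hGgrp.2.2, hs2G, mul_assoc, hG.1, mul_one]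
  refine ⟨hs2G, ?_⟩
  rw [antipode_mul_antidistrib, hsu, hsG', mul_assoc _ G', hG.2, mul_one]

/-- In a ribbon Hopf algebra `A` with special grouplike element `G` and Drinfeld element
`u = Σ s(e') e` (where `ρ = Σ e ⊗ e'` and `s²(x) = u x u⁻¹` for all `x`, `v = G⁻¹u` is
central, and `s(u) = G⁻¹ u G⁻¹`), the square of the antipode is conjugation by `G`:
`s²(x) = G x G⁻¹` for all `x`, and the central element `v = G⁻¹u` satisfies `s(v) = v`. -/
theorem stmt_18 (k A : Type*) [CommRing k] [Ring A] [HopfAlgebra k A]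
    (ρ : A ⊗[k] A) (u u' G G' : A)
    (hu_def : u = LinearMap.mul' k A
      (LinearMap.rTensor A (HopfAlgebra.antipode (R := k) (A := A))
        ((TensorProduct.comm k A A) ρ)))
    (hu : u * u' = 1 ∧ u' * u = 1)
    (hG : G * G' = 1 ∧ G' * G = 1)
    (hGgrp : Coalgebra.comul (R := k) G = G ⊗ₜ[k] G ∧
      Coalgebra.counit (R := k) G = (1 : k) ∧
      HopfAlgebra.antipode (R := k) G = G')
    (hs2 : ∀ x : A, HopfAlgebra.antipode (R := k) (HopfAlgebra.antipode (R := k) x) =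
      u * x * u')
    (hcentral : ∀ x : A, (G' * u) * x = x * (G' * u))
    (hsu : HopfAlgebra.antipode (R := k) u = G' * u * G') :
    (∀ x : A, HopfAlgebra.antipode (R := k) (HopfAlgebra.antipode (R := k) x) =
      G * x * G') ∧
    HopfAlgebra.antipode (R := k) (G' * u) = G' * u :=
  stmt_18_general k A u u' G G' hu hG hGgrp hs2 hcentral hsu
end
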